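/- The maximum size of a set of mutually unbiased weighing matrices of order 7 and weight 4 is 8; that is, there exist 8 pairwise unbiased weighing matrices of order 7 and weight 4, and there do not exist 9 pairwise unbiased weighing matrices of order 7 and weight 4. -/

import Mathlib

open Matrix

/-- `W` is a weighing matrix of order `d` and weight `k`: a `d × d` real matrix with all
entries in `{-1, 0, 1}` such that `W * Wᵀ = k • 1`. -/
def IsWeighing {d : ℕ} (k : ℝ) (W : Matrix (Fin d) (Fin d) ℝ) : Prop :=
  (∀ i j, W i j = -1 ∨ W i j = 0 ∨ W i j = 1) ∧
    W * Wᵀ = k • (1 : Matrix (Fin d) (Fin d) ℝ)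

/-- A family of mutually unbiased weighing matrices of order `d` and weight `k`:
each member is a weighing matrix of weight `k`, and for distinct members
`(1/√k) • (Wᵢ * Wⱼᵀ)` is again a weighing matrix of weight `k`. -/
def MUWM {d f : ℕ} (k : ℝ) (W : Fin f → Matrix (Fin d) (Fin d) ℝ) : Prop :=
  (∀ i, IsWeighing k (W i)) ∧
    ∀ i j, i ≠ j → IsWeighing k ((Real.sqrt k)⁻¹ • (W i * (W j)ᵀ))

/-- A family of mutually quasi-unbiased weighing matrices for parameters `(d, k, l, a)`:
each member is a weighing matrix of weight `k`, and for distinct members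
`(1/√a) • (Wᵢ * Wⱼᵀ)` is a weighing matrix of weight `l`. -/
def MQUWM {d f : ℕ} (k l a : ℝ) (W : Fin f → Matrix (Fin d) (Fin d) ℝ) : Prop :=
  (∀ i, IsWeighing k (W i)) ∧
    ∀ i j, i ≠ j → IsWeighing l ((Real.sqrt a)⁻¹ • (W i * (W j)ᵀ))

/-!
The lower bound is an explicit family of eight integer matrices, checked by computation.

For the upper bound, the `7 f` rows of `f` mutually unbiased weighing matrices of order `7` and
weight `4` are integer vectors with entries in `{-1, 0, 1}`, of weight `4`, whose pairwise inner
products lie in `{-2, 0, 2}`. Reduced mod `2` they are nonzero and pairwise orthogonal, so they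
span a totally isotropic subspace of `𝔽₂⁷`, of dimension at most `3`: at most `7` distinct
supports occur. Rows with a common support `P` are `±1`-vectors on `P`, and no two of them agree
up to sign (their inner product would be `±4`), so at most `2⁴ / 2 = 8` rows share a support.
Hence `7 f ≤ 7 · 8`.
-/

open Finset
open scoped Pointwise

def IsTernary {α R : Type*} [Zero R] [One R] [Neg R] (v : α → R) : Prop :=
  ∀ a, v a = -1 ∨ v a = 0 ∨ v a = 1

theorem card_add_one_le_of_isotropic {n : ℕ} (T : Finset (Fin n → ZMod 2)) (h0 : 0 ∉ T)
    (horth : ∀ x ∈ T, ∀ y ∈ T, x ⬝ᵥ y = 0) : #T + 1 ≤ 2 ^ (n / 2) := by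
  set B : LinearMap.BilinForm (ZMod 2) (Fin n → ZMod 2) := toBilin' 1
  have hB (x y : Fin n → ZMod 2) : B x y = x ⬝ᵥ y := by simp [B, toBilin'_apply']
  set U := Submodule.span (ZMod 2) (T : Set (Fin n → ZMod 2))
  have hiso : U ≤ B.orthogonal U := by
    refine Submodule.span_le.mpr fun x hx => ?_
    rw [SetLike.mem_coe, LinearMap.BilinForm.mem_orthogonal_iff]
    have : U ≤ LinearMap.ker (B.flip x) :=
      Submodule.span_le.mpr fun y hy => by simp [hB, horth y hy x hx]
    exact fun y hy => this hy
  have hdim : 2 * Module.finrank (ZMod 2) U ≤ n := by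
    have hle := Submodule.finrank_mono hiso
    rw [LinearMap.BilinForm.finrank_orthogonal
      (LinearMap.BilinForm.nondegenerate_toBilin'_of_det_ne_zero' _ (by simp)),
      Module.finrank_fin_fun] at hle
    have := Submodule.finrank_le U
    rw [Module.finrank_fin_fun] at this
    omega
  calc #T + 1 = #(insert 0 T) := (card_insert_of_notMem h0).symm
    _ ≤ Nat.card U := by
      rw [← SetLike.coe_sort_coe, Nat.card_coe_set_eq, ← Set.ncard_coe_finset]
      refine Set.ncard_le_ncard ?_ (Set.toFinite _)
      simp only [coe_insert, Set.insert_subset_iff]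
      exact ⟨U.zero_mem, Submodule.subset_span⟩
    _ = 2 ^ Module.finrank (ZMod 2) U := by
      rw [Module.natCard_eq_pow_finrank (K := ZMod 2), Nat.card_zmod]
    _ ≤ 2 ^ (n / 2) := Nat.pow_le_pow_right two_pos (by omega)

section SignVectors

variable {n : ℕ}

def signVectors (P : Finset (Fin n)) : Finset (Fin n → ℤ) :=
  Fintype.piFinset fun j => if j ∈ P then {-1, 1} else {0}

lemma card_signVectors (P : Finset (Fin n)) : #(signVectors P) = 2 ^ #P := by
  simp [signVectors, apply_ite Finset.card, prod_ite_mem]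

lemma neg_mem_signVectors {P : Finset (Fin n)} {v : Fin n → ℤ} (hv : v ∈ signVectors P) :
    -v ∈ signVectors P := by
  simp only [signVectors, Fintype.mem_piFinset] at hv ⊢
  intro j
  specialize hv j
  split_ifs at hv ⊢ <;> simp only [Pi.neg_apply, mem_insert, mem_singleton] at hv ⊢ <;> omega

lemma two_mul_card_le_of_subset_signVectors {P : Finset (Fin n)} {S : Finset (Fin n → ℤ)}
    (hS : S ⊆ signVectors P) (hdisj : Disjoint S (-S)) : 2 * #S ≤ 2 ^ #P := by
  calc 2 * #S = #(S ∪ -S) := by rw [card_union_of_disjoint hdisj, card_neg, two_mul]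
    _ ≤ #(signVectors P) := card_le_card <| union_subset hS fun v hv => by
        obtain ⟨w, hw, rfl⟩ := mem_neg.mp hv
        exact neg_mem_signVectors (hS hw)
    _ = 2 ^ #P := card_signVectors P

end SignVectors

namespace IsTernary

variable {n : ℕ} {v w : Fin n → ℤ}

lemma intCast_eq_zero_iff (hv : IsTernary v) (j : Fin n) : (v j : ZMod 2) = 0 ↔ v j = 0 := by
  rcases hv j with h | h | h <;> simp [h]

lemma mem_signVectors (hv : IsTernary v) : v ∈ signVectors {j | v j ≠ 0} := by
  simp only [signVectors, Fintype.mem_piFinset, mem_filter, mem_univ, true_and]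
  intro j
  rcases hv j with h | h | h <;> simp [h]

lemma dotProduct_self (hv : IsTernary v) : v ⬝ᵥ v = #{j | v j ≠ 0} := by
  rw [dotProduct, natCast_card_filter, ← sum_congr rfl fun j _ => ?_]
  rcases hv j with h | h | h <;> simp [h]

lemma support_eq_of_intCast_eq (hv : IsTernary v) (hw : IsTernary w)
    (h : (fun j => (v j : ZMod 2)) = fun j => (w j : ZMod 2)) :
    ({j | v j ≠ 0} : Finset (Fin n)) = ({j | w j ≠ 0} : Finset (Fin n)) := by
  refine Finset.ext fun j => ?_
  simp only [mem_filter, mem_univ, true_and, ne_eq, ← hv.intCast_eq_zero_iff,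
    ← hw.intCast_eq_zero_iff, congrFun h j]

lemma exists_intCast_eq {α : Type*} {x : α → ℝ} (hx : IsTernary x) :
    ∃ z : α → ℤ, IsTernary z ∧ ∀ a, (z a : ℝ) = x a := by
  have (a : α) : ∃ m : ℤ, (m = -1 ∨ m = 0 ∨ m = 1) ∧ (m : ℝ) = x a := by
    rcases hx a with h | h | h
    exacts [⟨-1, by simp [h]⟩, ⟨0, by simp [h]⟩, ⟨1, by simp [h]⟩]
  choose z hz using this
  exact ⟨z, fun a => (hz a).1, fun a => (hz a).2⟩

end IsTernary

lemma card_le_of_forall_intCast_eq {n k : ℕ} {ι : Type*} (v : ι → Fin n → ℤ) (hk : 0 < k)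
    (hv : ∀ i, IsTernary (v i)) (hself : ∀ i, v i ⬝ᵥ v i = k)
    (hlt : ∀ i j, i ≠ j → |v i ⬝ᵥ v j| < k) (s : Finset ι) (i₀ : ι)
    (hs : ∀ i ∈ s, (fun j => (v i j : ZMod 2)) = fun j => (v i₀ j : ZMod 2)) :
    #s ≤ 2 ^ (k - 1) := by
  have heq_of_abs (i j : ι) (hij : |v i ⬝ᵥ v j| = k) : i = j := by
    by_contra hne
    exact (hlt i j hne).ne hij
  have hinj : Set.InjOn v s := fun i _ j _ hij => heq_of_abs i j (by simp [hij, hself])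
  have hsupp : #{j | v i₀ j ≠ 0} = k := by
    exact_mod_cast (hv i₀).dotProduct_self.symm.trans (hself i₀)
  have hsub : s.image v ⊆ signVectors {j | v i₀ j ≠ 0} := by
    simp only [subset_iff, mem_image]
    rintro _ ⟨i, hi, rfl⟩
    rw [← (hv i).support_eq_of_intCast_eq (hv i₀) (hs i hi)]
    exact (hv i).mem_signVectors
  have hdisj : Disjoint (s.image v) (-s.image v) := by
    simp only [disjoint_left, mem_neg, mem_image, not_exists, not_and]
    rintro _ ⟨i, -, rfl⟩ _ ⟨j, -, rfl⟩ hij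
    have hneg : v i ⬝ᵥ v j = -k := by rw [← hij, neg_dotProduct, hself]
    obtain rfl := heq_of_abs i j (by simp [hneg])
    linarith [hself i]
  have := two_mul_card_le_of_subset_signVectors hsub hdisj
  have h2k : 2 ^ k = 2 ^ (k - 1) * 2 := by rw [← pow_succ, Nat.sub_add_cancel hk]
  rw [card_image_of_injOn hinj, hsupp, h2k] at this
  omega

theorem card_le_of_ternary_of_even_dotProduct {n k : ℕ} {ι : Type*} [Fintype ι]
    (v : ι → Fin n → ℤ) (hk : 0 < k) (hv : ∀ i, IsTernary (v i)) (hself : ∀ i, v i ⬝ᵥ v i = k)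
    (heven : ∀ i j, Even (v i ⬝ᵥ v j)) (hlt : ∀ i j, i ≠ j → |v i ⬝ᵥ v j| < k) :
    Fintype.card ι ≤ (2 ^ (n / 2) - 1) * 2 ^ (k - 1) := by
  set χ : ι → Fin n → ZMod 2 := fun i j => (v i j : ZMod 2)
  have hχ0 (i : ι) : χ i ≠ 0 := by
    intro h
    have hzero : v i = 0 := funext fun j => ((hv i).intCast_eq_zero_iff j).mp (congrFun h j)
    have := hself i
    simp only [hzero, zero_dotProduct] at this
    omega
  have hsupports : #(univ.image χ) + 1 ≤ 2 ^ (n / 2) := by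
    refine card_add_one_le_of_isotropic _ (by simpa [eq_comm] using hχ0) ?_
    simp only [mem_image, mem_univ, true_and]
    rintro _ ⟨i, rfl⟩ _ ⟨j, rfl⟩
    calc χ i ⬝ᵥ χ j = ((v i ⬝ᵥ v j : ℤ) : ZMod 2) := ((Int.castRingHom _).map_dotProduct _ _).symm
      _ = 0 := ZMod.intCast_eq_zero_iff_even.mpr (heven i j)
  have hfiber : ∀ t ∈ univ.image χ, #{i | χ i = t} ≤ 2 ^ (k - 1) := by
    simp only [mem_image, mem_univ, true_and]
    rintro _ ⟨i₀, rfl⟩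
    exact card_le_of_forall_intCast_eq v hk hv hself hlt _ i₀ fun i hi => (mem_filter.mp hi).2
  calc Fintype.card ι = #(univ : Finset ι) := rfl
    _ ≤ 2 ^ (k - 1) * #(univ.image χ) := card_le_mul_card_image _ _ hfiber
    _ ≤ (2 ^ (n / 2) - 1) * 2 ^ (k - 1) := by rw [mul_comm]; gcongr; omega

lemma inv_sqrt_mul_ternary_iff {k x : ℝ} (hk : 0 < k) :
    ((√k)⁻¹ * x = -1 ∨ (√k)⁻¹ * x = 0 ∨ (√k)⁻¹ * x = 1) ↔ (x = -√k ∨ x = 0 ∨ x = √k) := by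
  have : √k ≠ 0 := (Real.sqrt_pos.mpr hk).ne'
  field_simp
  constructor <;> rintro (h | h | h) <;> simp_all [eq_neg_iff_add_eq_zero]

namespace IsWeighing

variable {d : ℕ} {k : ℝ} {W M N : Matrix (Fin d) (Fin d) ℝ}

lemma dotProduct_row (hW : IsWeighing k W) (a b : Fin d) :
    W a ⬝ᵥ W b = if a = b then k else 0 := by
  simpa [mul_apply, dotProduct, one_apply] using congrFun (congrFun hW.2 a) b

lemma transpose_mul_self (hW : IsWeighing k W) (hk : k ≠ 0) : Wᵀ * W = k • 1 := by
  have : (k⁻¹ • Wᵀ) * W = 1 := mul_eq_one_comm.mp <| by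
    rw [Matrix.mul_smul, hW.2, smul_smul, inv_mul_cancel₀ hk, one_smul]
  rwa [Matrix.smul_mul, inv_smul_eq_iff₀ hk] at this

lemma smul_mul_transpose (hM : IsWeighing k M) (hN : IsWeighing k N) (hk : 0 < k)
    (hMN : ∀ a b, (M * Nᵀ) a b = -√k ∨ (M * Nᵀ) a b = 0 ∨ (M * Nᵀ) a b = √k) :
    IsWeighing k ((√k)⁻¹ • (M * Nᵀ)) := by
  refine ⟨fun a b => ?_, ?_⟩
  · simpa only [Matrix.smul_apply, smul_eq_mul, inv_sqrt_mul_ternary_iff hk] using hMN a b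
  · calc (√k)⁻¹ • (M * Nᵀ) * ((√k)⁻¹ • (M * Nᵀ))ᵀ
        = ((√k)⁻¹ * (√k)⁻¹) • (M * (Nᵀ * N) * Mᵀ) := by
          simp only [transpose_smul, transpose_mul, transpose_transpose, Matrix.smul_mul,
            Matrix.mul_smul, smul_smul, Matrix.mul_assoc]
      _ = k • 1 := by
          rw [hN.transpose_mul_self hk.ne', Matrix.mul_smul, Matrix.smul_mul, Matrix.mul_one, hM.2,
            smul_smul, ← mul_inv, Real.mul_self_sqrt hk.le, inv_mul_cancel₀ hk.ne', one_smul]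

end IsWeighing

namespace MUWM

variable {d f : ℕ}

lemma dotProduct_row {k : ℝ} {W : Fin f → Matrix (Fin d) (Fin d) ℝ} (hW : MUWM k W) (hk : 0 < k)
    {p q : Fin f × Fin d} (hpq : p ≠ q) :
    W p.1 p.2 ⬝ᵥ W q.1 q.2 = -√k ∨ W p.1 p.2 ⬝ᵥ W q.1 q.2 = 0 ∨ W p.1 p.2 ⬝ᵥ W q.1 q.2 = √k := by
  obtain ⟨i, a⟩ := p
  obtain ⟨j, b⟩ := q
  by_cases hij : i = j
  · subst hij
    have hab : a ≠ b := fun h => hpq (by rw [h])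
    simp [(hW.1 i).dotProduct_row, hab]
  · rw [← inv_sqrt_mul_ternary_iff hk]
    simpa [mul_apply, dotProduct] using (hW.2 i j hij).1 a b

theorem card_mul_le {m : ℕ} (hm : Even m) (hm0 : m ≠ 0)
    {W : Fin f → Matrix (Fin d) (Fin d) ℝ} (hW : MUWM ((m : ℝ) ^ 2) W) :
    f * d ≤ (2 ^ (d / 2) - 1) * 2 ^ (m ^ 2 - 1) := by
  obtain ⟨z, hz, hzW⟩ : ∃ z : Fin f × Fin d → Fin d → ℤ, (∀ p, IsTernary (z p)) ∧
      ∀ p j, (z p j : ℝ) = W p.1 p.2 j := by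
    choose z hz hzW using fun p : Fin f × Fin d => IsTernary.exists_intCast_eq ((hW.1 p.1).1 p.2)
    exact ⟨z, hz, hzW⟩
  have hdot (p q : Fin f × Fin d) : ((z p ⬝ᵥ z q : ℤ) : ℝ) = W p.1 p.2 ⬝ᵥ W q.1 q.2 := by
    simp only [dotProduct, Int.cast_sum, Int.cast_mul, hzW]
  have hself (p : Fin f × Fin d) : z p ⬝ᵥ z p = ((m ^ 2 : ℕ) : ℤ) := by
    have := (hW.1 p.1).dotProduct_row p.2 p.2
    rw [if_pos rfl, ← hdot] at this
    exact_mod_cast this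
  have hcross {p q : Fin f × Fin d} (hpq : p ≠ q) :
      z p ⬝ᵥ z q = -m ∨ z p ⬝ᵥ z q = 0 ∨ z p ⬝ᵥ z q = m := by
    have := hW.dotProduct_row (by positivity) hpq
    rw [Real.sqrt_sq m.cast_nonneg, ← hdot] at this
    exact_mod_cast this
  have hm2 : (m : ℤ) < m ^ 2 := by
    have : 2 ≤ m := by obtain ⟨r, rfl⟩ := hm; omega
    nlinarith
  have := card_le_of_ternary_of_even_dotProduct z (by positivity) hz hself (fun p q => ?_)
    (fun p q hpq => ?_)
  · simpa using this
  · by_cases hpq : p = q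
    · rw [hpq, hself]
      exact_mod_cast hm.pow_of_ne_zero two_ne_zero
    · have hm' : Even (m : ℤ) := by exact_mod_cast hm
      rcases hcross hpq with h | h | h <;> simp [h, hm']
  · rcases hcross hpq with h | h | h <;> simp [h] <;> omega

theorem map_intCast {m : ℕ} (hm : m ≠ 0) (A : Fin f → Matrix (Fin d) (Fin d) ℤ)
    (hA : ∀ i a, IsTernary (A i a)) (hAA : ∀ i, A i * (A i)ᵀ = (m : ℤ) ^ 2 • 1)
    (hAB : ∀ i j, i ≠ j → ∀ a b,
      (A i * (A j)ᵀ) a b = -m ∨ (A i * (A j)ᵀ) a b = 0 ∨ (A i * (A j)ᵀ) a b = m) :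
    MUWM ((m : ℝ) ^ 2) fun i => (A i).map (↑) := by
  have hmap (i j : Fin f) :
      (A i).map (↑) * ((A j).map (↑))ᵀ = (A i * (A j)ᵀ).map (Int.cast : ℤ → ℝ) := by
    ext a b
    simp [mul_apply]
  have hweigh (i : Fin f) : IsWeighing ((m : ℝ) ^ 2) ((A i).map (↑)) := by
    refine ⟨fun a b => ?_, ?_⟩
    · rcases hA i a b with h | h | h <;> simp [h]
    · rw [hmap, hAA]
      ext a b
      simp only [map_apply, Matrix.smul_apply, one_apply, smul_eq_mul]
      split_ifs <;> simp
  refine ⟨hweigh, fun i j hij => (hweigh i).smul_mul_transpose (hweigh j) (by positivity) ?_⟩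
  intro a b
  rw [hmap, map_apply, Real.sqrt_sq m.cast_nonneg]
  rcases hAB i j hij a b with h | h | h <;> simp [h]

end MUWM

def W74 : Fin 8 → Matrix (Fin 7) (Fin 7) ℤ :=
  ![!![1, 1, 1, 0, 0, 0, 1;
    1, -1, 0, 1, 0, 1, 0;
    1, 0, -1, 0, 1, -1, 0;
    1, 0, 0, -1, -1, 0, -1;
    0, 1, -1, 1, -1, 0, 0;
    0, 1, 0, 0, 1, 1, -1;
    0, 0, 1, 1, 0, -1, -1],
  !![1, 1, 1, 0, 0, 0, -1;
    1, -1, 0, 1, 0, -1, 0;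
    1, 0, -1, 0, -1, 1, 0;
    1, 0, 0, -1, 1, 0, 1;
    0, 1, -1, 1, 1, 0, 0;
    0, 1, 0, 0, -1, -1, 1;
    0, 0, 1, 1, 0, 1, 1],
  !![1, 1, -1, 0, 0, 0, 1;
    1, -1, 0, -1, 0, -1, 0;
    1, 0, 1, 0, 1, 1, 0;
    1, 0, 0, 1, -1, 0, -1;
    0, 1, 1, -1, -1, 0, 0;
    0, 1, 0, 0, 1, -1, -1;
    0, 0, 1, 1, 0, -1, 1],
  !![1, 1, -1, 0, 0, 0, -1;
    1, -1, 0, -1, 0, 1, 0;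
    1, 0, 1, 0, -1, -1, 0;
    1, 0, 0, 1, 1, 0, 1;
    0, 1, 1, -1, 1, 0, 0;
    0, 1, 0, 0, -1, 1, 1;
    0, 0, 1, 1, 0, 1, -1],
  !![1, -1, 1, 0, 0, 0, 1;
    1, 1, 0, -1, 0, 1, 0;
    1, 0, -1, 0, -1, -1, 0;
    1, 0, 0, 1, 1, 0, -1;
    0, 1, 1, 1, -1, 0, 0;
    0, 1, 0, 0, 1, -1, 1;
    0, 0, 1, -1, 0, -1, -1],
  !![1, -1, 1, 0, 0, 0, -1;
    1, 1, 0, -1, 0, -1, 0;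
    1, 0, -1, 0, 1, 1, 0;
    1, 0, 0, 1, -1, 0, 1;
    0, 1, 1, 1, 1, 0, 0;
    0, 1, 0, 0, -1, 1, -1;
    0, 0, 1, -1, 0, 1, 1],
  !![1, -1, -1, 0, 0, 0, 1;
    1, 1, 0, 1, 0, -1, 0;
    1, 0, 1, 0, -1, 1, 0;
    1, 0, 0, -1, 1, 0, -1;
    0, 1, -1, -1, -1, 0, 0;
    0, 1, 0, 0, 1, 1, 1;
    0, 0, 1, -1, 0, -1, 1],
  !![1, -1, -1, 0, 0, 0, -1;
    1, 1, 0, 1, 0, 1, 0;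
    1, 0, 1, 0, 1, -1, 0;
    1, 0, 0, -1, -1, 0, 1;
    0, 1, -1, -1, 1, 0, 0;
    0, 1, 0, 0, -1, -1, -1;
    0, 0, 1, -1, 0, 1, -1]]

lemma W74_isTernary : ∀ i a, IsTernary (W74 i a) := by
  intro i a b
  fin_cases i <;> fin_cases a <;> fin_cases b <;> decide

lemma W74_mul_transpose_self : ∀ i, W74 i * (W74 i)ᵀ = 2 ^ 2 • 1 := by
  decide

lemma W74_mul_transpose_of_ne : ∀ i j, i ≠ j → ∀ a b, (W74 i * (W74 j)ᵀ) a b = -2 ∨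
    (W74 i * (W74 j)ᵀ) a b = 0 ∨ (W74 i * (W74 j)ᵀ) a b = 2 := by
  decide

/-- the maximum size of a set of mutually unbiased weighing matrices of
order `7` and weight `4` is `8`. -/
theorem stmt16 :
    (∃ W : Fin 8 → Matrix (Fin 7) (Fin 7) ℝ, MUWM (4 : ℝ) W) ∧
    ¬∃ W : Fin 9 → Matrix (Fin 7) (Fin 7) ℝ, MUWM (4 : ℝ) W := by
  refine ⟨?_, fun ⟨W, hW⟩ => ?_⟩
  · have := MUWM.map_intCast two_ne_zero W74 W74_isTernary W74_mul_transpose_self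
      W74_mul_transpose_of_ne
    norm_num at this
    exact ⟨_, this⟩
  · have := MUWM.card_mul_le (m := 2) even_two two_ne_zero (W := W) (by norm_num [hW])
    norm_num at this
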